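/- Fast descent to the metastable magnetization at low temperature: let β > 1 and let s* denote the unique positive solution of tanh(βs) = s. For α > 0, let τ* := inf{t ≥ 0 : S⁺_t ≤ s* + α·n^{-1/2}} for the restricted magnetization chain (S⁺_t). Then there exists a constant c > 0, depending only on α and β, such that for every starting state, P(τ* > c·n·log n) → 0 as n → ∞. -/

import Mathlib

/-!
Above the level `s⋆ + 2/n`, `V(σ) = (S(σ) - s⋆)⁺` is a Lyapunov function for the restricted
chain. Since `tanh` is concave on `[0, ∞)`, `tanh (β s)` lies below its tangent line at `s⋆`,
whose slope `L = β (1 - s⋆²)` is `< 1` because `sinh x cosh x > x`; so one step of the chain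
multiplies the expectation of `V` by at most `ρ = 1 - (1 - L)/n`. Hence the probability of
staying above `b = s⋆ + α n^{-1/2}` for `t` steps is at most
`ρ^t V(σ)/(b - s⋆) ≤ ρ^t √n / α`, which is `O(n^{-3/2})` for `t = ⌊2 n log n / (1 - L)⌋`.
-/

open Filter Real

namespace CW

/-- Configurations of the Curie-Weiss model on `n` vertices:
`true` encodes spin `+1` and `false` encodes spin `-1`. -/
abbrev Config (n : ℕ) := Fin n → Bool

noncomputable section

/-- The spin (±1) at site `i`. -/
def spin {n : ℕ} (σ : Config n) (i : Fin n) : ℝ := if σ i then 1 else -1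

/-- Normalized magnetization `S(σ) = n⁻¹ ∑ᵢ σ(i)`. -/
def mag {n : ℕ} (σ : Config n) : ℝ := (∑ i, spin σ i) / n

/-- `p₊(s) = (1 + tanh(βs))/2`. -/
def pPlus (β s : ℝ) : ℝ := (1 + Real.tanh (β * s)) / 2

/-- One-step transition kernel of the Glauber dynamics for the Curie-Weiss
model: a uniformly chosen site `i` is refreshed, becoming `+1` with
probability `p₊(S(σ) - σ(i)/n)`. -/
def glauberKernel (β : ℝ) (n : ℕ) (σ η : Config n) : ℝ :=
  (1 / n) * ∑ i : Fin n,
    if ∀ j, j ≠ i → η j = σ j then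
      (if η i then pPlus β (mag σ - spin σ i / n)
       else 1 - pPlus β (mag σ - spin σ i / n))
    else 0

/-- Law of the Glauber dynamics at time `t` started from `σ`. -/
def glauberLaw (β : ℝ) (n : ℕ) : ℕ → Config n → Config n → ℝ
  | 0, σ, η => if η = σ then 1 else 0
  | t + 1, σ, η => ∑ τ : Config n, glauberLaw β n t σ τ * glauberKernel β n τ η

/-- The (normalized) exponent in the Curie-Weiss measure. -/
def cwExponent {n : ℕ} (β : ℝ) (σ : Config n) : ℝ :=
  (β / n) * ∑ i : Fin n, ∑ j : Fin n, if i < j then spin σ i * spin σ j else 0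

/-- The Curie-Weiss (mean-field Ising) probability measure
`μ(σ) = Z(β)⁻¹ exp((β/n) ∑_{i<j} σ(i)σ(j))`. -/
def cwMeasure (β : ℝ) (n : ℕ) (σ : Config n) : ℝ :=
  Real.exp (cwExponent β σ) / ∑ η : Config n, Real.exp (cwExponent β η)

/-- Total variation distance between two (discrete) distributions. -/
def tvDist {Ω : Type*} [Fintype Ω] (μ ν : Ω → ℝ) : ℝ :=
  (∑ x, |μ x - ν x|) / 2

/-- Worst-case total variation distance to stationarity at time `t`. -/
def glauberDist (β : ℝ) (n t : ℕ) : ℝ :=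
  ⨆ σ : Config n, tvDist (glauberLaw β n t σ) (cwMeasure β n)

/-- The global spin flip `σ ↦ -σ`. -/
def negConfig {n : ℕ} (σ : Config n) : Config n := fun i => !(σ i)

/-- Transition kernel of the Glauber dynamics restricted to the set
`Ω⁺ = {σ : S(σ) ≥ 0}`: a candidate move `η'` is generated by the Glauber
dynamics; if `S(η') ≥ 0` the chain moves to `η'`, otherwise it moves
to `-η'`. -/
def rKernel (β : ℝ) (n : ℕ) (σ η : Config n) : ℝ :=
  (if 0 ≤ mag η then glauberKernel β n σ η else 0) +
    (if mag (negConfig η) < 0 then glauberKernel β n σ (negConfig η) else 0)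

/-- Law of the restricted Glauber dynamics at time `t` started from `σ`. -/
def rLaw (β : ℝ) (n : ℕ) : ℕ → Config n → Config n → ℝ
  | 0, σ, η => if η = σ then 1 else 0
  | t + 1, σ, η => ∑ τ : Config n, rLaw β n t σ τ * rKernel β n τ η

/-- Probability that the restricted magnetization chain started from `σ` stays
strictly above the level `b` at all times `0, 1, …, t`; that is,
`P_σ(S⁺_0 > b, S⁺_1 > b, …, S⁺_t > b)`. -/
def surviveAbove (β : ℝ) (n : ℕ) (b : ℝ) : ℕ → Config n → ℝ
  | 0, σ => if b < mag σ then 1 else 0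
  | t + 1, σ =>
      if b < mag σ then ∑ η, rKernel β n σ η * surviveAbove β n b t η else 0

theorem _root_.Real.hasDerivAt_tanh (x : ℝ) : HasDerivAt tanh (1 - tanh x ^ 2) x := by
  have h := (hasDerivAt_sinh x).div (hasDerivAt_cosh x) (cosh_pos x).ne'
  rw [show tanh = fun y => sinh y / cosh y from funext tanh_eq_sinh_div_cosh]
  refine h.congr_deriv ?_
  field_simp

theorem _root_.Real.tanh_strictMono : StrictMono tanh :=
  strictMono_of_hasDerivAt_pos hasDerivAt_tanh fun x => by linarith [tanh_sq_lt_one x]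

theorem _root_.Real.tanh_nonneg {x : ℝ} (hx : 0 ≤ x) : 0 ≤ tanh x := by
  simpa using tanh_strictMono.monotone hx

theorem _root_.Real.tanh_le_tanh_add_mul_sub {x y : ℝ} (hx : 0 ≤ x) (hxy : x ≤ y) :
    tanh y ≤ tanh x + (1 - tanh x ^ 2) * (y - x) := by
  set g := fun z => tanh x + (1 - tanh x ^ 2) * (z - x) - tanh z
  have hg : ∀ z, HasDerivAt g (tanh z ^ 2 - tanh x ^ 2) z := fun z =>
    ((((hasDerivAt_id z).sub_const x).const_mul (1 - tanh x ^ 2)).const_add (tanh x)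
      |>.sub (hasDerivAt_tanh z)).congr_deriv (by ring)
  have hmono : MonotoneOn g (Set.Ici x) := by
    refine monotoneOn_of_hasDerivWithinAt_nonneg (convex_Ici x)
      (fun z _ => (hg z).continuousAt.continuousWithinAt) (fun z _ => (hg z).hasDerivWithinAt)
      fun z hz => ?_
    rw [interior_Ici] at hz
    have := tanh_strictMono.monotone (le_of_lt hz)
    nlinarith [tanh_nonneg hx]
  have := hmono Set.self_mem_Ici hxy hxy
  simp only [g, sub_self, mul_zero, add_zero] at this
  linarith

theorem _root_.Real.mul_one_sub_tanh_sq_lt_tanh {x : ℝ} (hx : 0 < x) :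
    x * (1 - tanh x ^ 2) < tanh x := by
  have hc := cosh_pos x
  have hsinh : x < sinh x * cosh x := by
    nlinarith [self_lt_sinh_iff.mpr hx, one_le_cosh x]
  have hsech : 1 - tanh x ^ 2 = 1 / cosh x ^ 2 := by
    rw [tanh_eq_sinh_div_cosh]
    field_simp
    linarith [cosh_sq x]
  rw [hsech, mul_one_div, tanh_eq_sinh_div_cosh, div_lt_div_iff₀ (by positivity) hc]
  nlinarith

theorem mul_one_sub_sq_nonneg_of_tanh_eq {β sstar : ℝ} (hβ : 0 ≤ β)
    (hfix : tanh (β * sstar) = sstar) : 0 ≤ β * (1 - sstar ^ 2) :=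
  mul_nonneg hβ (by rw [← hfix]; linarith [tanh_sq_lt_one (β * sstar)])

theorem mul_one_sub_sq_lt_one_of_tanh_eq {β sstar : ℝ} (hβ : 0 < β) (hs : 0 < sstar)
    (hfix : tanh (β * sstar) = sstar) : β * (1 - sstar ^ 2) < 1 := by
  have h := mul_one_sub_tanh_sq_lt_tanh (mul_pos hβ hs)
  rw [hfix, mul_right_comm] at h
  exact (mul_lt_iff_lt_one_left hs).mp h

theorem one_sub_div_pow_floor_le {γ : ℝ} (hγ : 0 < γ) (hγ1 : γ ≤ 1) {n : ℕ}
    (hn : 1 ≤ n) :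
    (1 - γ / n) ^ ⌊2 / γ * n * log n⌋₊ ≤ exp 1 / n ^ 2 := by
  have hn0 : (0 : ℝ) < n := by exact_mod_cast hn
  have hγn : γ / n ≤ 1 := by rw [div_le_one hn0]; exact hγ1.trans (by exact_mod_cast hn)
  set T := ⌊2 / γ * n * log n⌋₊
  have hT : 2 * log n - 1 ≤ γ / n * T := by
    have h := mul_le_mul_of_nonneg_left (Nat.lt_floor_add_one (2 / γ * n * log n)).le
      (div_pos hγ hn0).le
    have : γ / n * (2 / γ * n * log n) = 2 * log n := by field_simp
    linarith
  calc (1 - γ / n) ^ T ≤ exp (-(γ / n)) ^ T :=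
        pow_le_pow_left₀ (by linarith) (one_sub_le_exp_neg _) T
    _ = exp (-(γ / n * T)) := by rw [← exp_nat_mul]; ring_nf
    _ ≤ exp (1 - 2 * log n) := exp_le_exp.mpr (by linarith)
    _ = exp 1 / n ^ 2 := by
        rw [exp_sub, show 2 * log n = log (n ^ 2) by rw [log_pow]; norm_num,
          exp_log (by positivity)]

section Chain

variable {n : ℕ}

theorem spin_le_one (σ : Config n) (i : Fin n) : spin σ i ≤ 1 := by
  unfold spin; split_ifs <;> norm_num

theorem mag_le_one (σ : Config n) : mag σ ≤ 1 := by
  rcases Nat.eq_zero_or_pos n with rfl | hn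
  · simp [mag]
  · rw [mag, div_le_one (by exact_mod_cast hn)]
    simpa using Finset.sum_le_sum fun i (_ : i ∈ Finset.univ) => spin_le_one σ i

theorem mag_update (σ : Config n) (i : Fin n) (b : Bool) :
    mag (Function.update σ i b) = mag σ - spin σ i / n + (if b then 1 else -1) / n := by
  have h : spin (Function.update σ i b) = Function.update (spin σ) i (if b then 1 else -1) := by
    ext j
    rcases eq_or_ne j i with rfl | hj <;> simp [spin, *]
  rw [mag, mag, h, Finset.sum_update_of_mem (Finset.mem_univ i),
    Finset.sum_sdiff_eq_sub (Finset.subset_univ {i}), Finset.sum_singleton]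
  ring

theorem univ_filter_agree_off_eq (σ : Config n) (i : Fin n) :
    Finset.univ.filter (fun η : Config n => ∀ j, j ≠ i → η j = σ j)
      = {Function.update σ i true, Function.update σ i false} := by
  ext η
  simp only [Finset.mem_filter, Finset.mem_univ, true_and, Finset.mem_insert,
    Finset.mem_singleton]
  constructor
  · intro h
    have he : η = Function.update σ i (η i) := by
      ext j
      rcases eq_or_ne j i with rfl | hj
      · simp
      · simp [hj, h j hj]
    cases hb : η i <;> rw [hb] at he <;> simp [he]
  · rintro (rfl | rfl) j hj <;> simp [hj]

theorem sum_glauberKernel_mul (β : ℝ) (σ : Config n) (G : Config n → ℝ) :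
    ∑ η, glauberKernel β n σ η * G η
      = (1 / n) * ∑ i : Fin n,
          (pPlus β (mag σ - spin σ i / n) * G (Function.update σ i true)
            + (1 - pPlus β (mag σ - spin σ i / n)) * G (Function.update σ i false)) := by
  simp only [glauberKernel, mul_assoc, ← Finset.mul_sum, Finset.sum_mul]
  rw [Finset.sum_comm]
  congr 1
  refine Finset.sum_congr rfl fun i _ => ?_
  simp only [ite_mul, zero_mul]
  rw [← Finset.sum_filter, univ_filter_agree_off_eq, Finset.sum_pair]
  · simp
  · exact fun h => by simpa using congrFun h i

theorem sum_glauberKernel_mul_comp_mag (β : ℝ) (σ : Config n) (φ : ℝ → ℝ) :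
    ∑ η, glauberKernel β n σ η * φ (mag η)
      = (1 / n) * ∑ i : Fin n,
          (pPlus β (mag σ - spin σ i / n) * φ (mag σ - spin σ i / n + 1 / n)
            + (1 - pPlus β (mag σ - spin σ i / n)) * φ (mag σ - spin σ i / n - 1 / n)) := by
  simp only [sum_glauberKernel_mul, mag_update, if_true, Bool.false_eq_true, if_false, neg_div,
    ← sub_eq_add_neg]

theorem negConfig_involutive : Function.Involutive (negConfig (n := n)) := by
  intro η; ext i; simp [negConfig]

theorem mag_negConfig (η : Config n) : mag (negConfig η) = -mag η := by
  have h : spin (negConfig η) = -spin η := by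
    ext i
    simp only [spin, negConfig, Pi.neg_apply]
    split_ifs <;> simp_all
  rw [mag, mag, h, Pi.neg_def, Finset.sum_neg_distrib, neg_div]

theorem sum_rKernel_mul_comp_mag (β : ℝ) (σ : Config n) (φ : ℝ → ℝ) :
    ∑ η, rKernel β n σ η * φ (mag η) = ∑ η, glauberKernel β n σ η * φ |mag η| := by
  have hflip : ∑ η, (if mag (negConfig η) < 0 then glauberKernel β n σ (negConfig η) else 0)
        * φ (mag η)
      = ∑ η, (if mag η < 0 then glauberKernel β n σ η else 0) * φ (-mag η) :=
    Fintype.sum_equiv negConfig_involutive.toPerm _ _ fun η => by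
      simp [mag_negConfig]
  simp only [rKernel, add_mul, Finset.sum_add_distrib]
  rw [hflip, ← Finset.sum_add_distrib]
  refine Finset.sum_congr rfl fun η _ => ?_
  rcases le_or_gt 0 (mag η) with h | h
  · simp [h, abs_of_nonneg h, not_lt.mpr h]
  · simp [h, abs_of_neg h, not_le.mpr h]

theorem pPlus_nonneg (β s : ℝ) : 0 ≤ pPlus β s := by
  unfold pPlus; linarith [neg_one_lt_tanh (β * s)]

theorem pPlus_le_one (β s : ℝ) : pPlus β s ≤ 1 := by
  unfold pPlus; linarith [tanh_lt_one (β * s)]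

theorem glauberKernel_nonneg (β : ℝ) (σ η : Config n) : 0 ≤ glauberKernel β n σ η := by
  unfold glauberKernel
  refine mul_nonneg (by positivity) (Finset.sum_nonneg fun i _ => ?_)
  have := pPlus_le_one β (mag σ - spin σ i / n)
  split_ifs <;> linarith [pPlus_nonneg β (mag σ - spin σ i / n)]

theorem rKernel_nonneg (β : ℝ) (σ η : Config n) : 0 ≤ rKernel β n σ η := by
  unfold rKernel
  split_ifs <;> linarith [glauberKernel_nonneg β σ η, glauberKernel_nonneg β σ (negConfig η)]

theorem sum_rKernel_mul_max_mag_sub_le {β sstar : ℝ} (hβ : 0 ≤ β) (hs : 0 ≤ sstar)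
    (hfix : tanh (β * sstar) = sstar) {σ : Config n} (hσ : sstar + 2 / n < mag σ) :
    ∑ η, rKernel β n σ η * max (mag η - sstar) 0
      ≤ (1 - (1 - β * (1 - sstar ^ 2)) / n) * (mag σ - sstar) := by
  have hn : (0 : ℝ) < n := by
    rcases Nat.eq_zero_or_pos n with rfl | hn
    · simp only [mag, CharP.cast_eq_zero, div_zero] at hσ
      linarith
    · exact_mod_cast hn
  have h1n : 0 < 1 / (n : ℝ) := one_div_pos.mpr hn
  set L := β * (1 - sstar ^ 2)
  have hL : 0 ≤ L := mul_one_sub_sq_nonneg_of_tanh_eq hβ hfix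
  have hsite : ∀ i,
      pPlus β (mag σ - spin σ i / n) * max (|mag σ - spin σ i / n + 1 / n| - sstar) 0
      + (1 - pPlus β (mag σ - spin σ i / n)) * max (|mag σ - spin σ i / n - 1 / n| - sstar) 0
      ≤ (1 + L / n) * (mag σ - spin σ i / n - sstar) + sstar / n := by
    intro i
    set s := mag σ - spin σ i / n
    have hs_ge : sstar + 1 / n ≤ s := by
      have : spin σ i / n ≤ 1 / n := div_le_div_of_nonneg_right (spin_le_one σ i) hn.le
      have : (2 : ℝ) / n = 1 / n + 1 / n := by ring
      linarith
    have hup : max (|s + 1 / n| - sstar) 0 = s + 1 / n - sstar := by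
      rw [abs_of_nonneg (by linarith), max_eq_left (by linarith)]
    have hdown : max (|s - 1 / n| - sstar) 0 = s - 1 / n - sstar := by
      rw [abs_of_nonneg (by linarith), max_eq_left (by linarith)]
    have htanh : tanh (β * s) ≤ sstar + L * (s - sstar) := by
      have := tanh_le_tanh_add_mul_sub (mul_nonneg hβ hs)
        (mul_le_mul_of_nonneg_left (show sstar ≤ s by linarith) hβ)
      rw [hfix] at this
      linarith
    calc pPlus β s * max (|s + 1 / n| - sstar) 0 + (1 - pPlus β s) * max (|s - 1 / n| - sstar) 0
        = s - sstar + tanh (β * s) / n := by rw [hup, hdown, pPlus]; ring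
      _ ≤ s - sstar + (sstar + L * (s - sstar)) / n := by
          linarith [div_le_div_of_nonneg_right htanh hn.le]
      _ = (1 + L / n) * (s - sstar) + sstar / n := by ring
  have hspin : ∑ i, spin σ i = n * mag σ := by rw [mag]; field_simp
  rw [sum_rKernel_mul_comp_mag β σ fun x => max (x - sstar) 0,
    sum_glauberKernel_mul_comp_mag β σ fun x => max (|x| - sstar) 0]
  calc (1 / n) * ∑ i : Fin n, _
      ≤ (1 / n) * ∑ i : Fin n, ((1 + L / n) * (mag σ - spin σ i / n - sstar) + sstar / n) :=
        mul_le_mul_of_nonneg_left (Finset.sum_le_sum fun i _ => hsite i) h1n.le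
    _ = (1 - (1 - L) / n) * (mag σ - sstar) - L * mag σ / n ^ 2 := by
        simp only [Finset.sum_add_distrib, ← Finset.mul_sum, Finset.sum_sub_distrib,
          ← Finset.sum_div, hspin, Finset.sum_const, Finset.card_univ, Fintype.card_fin,
          nsmul_eq_mul]
        field_simp
        ring
    _ ≤ (1 - (1 - L) / n) * (mag σ - sstar) := by
        have : 0 ≤ L * mag σ / n ^ 2 :=
          div_nonneg (mul_nonneg hL (by linarith [div_pos two_pos hn])) (sq_nonneg _)
        linarith

theorem surviveAbove_nonneg (β b : ℝ) (t : ℕ) (σ : Config n) :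
    0 ≤ surviveAbove β n b t σ := by
  induction t generalizing σ with
  | zero => unfold surviveAbove; split_ifs <;> norm_num
  | succ t ih =>
    unfold surviveAbove
    split_ifs
    · exact Finset.sum_nonneg fun η _ => mul_nonneg (rKernel_nonneg β σ η) (ih η)
    · exact le_rfl

theorem surviveAbove_le_pow_mul {β b ρ : ℝ} {V : Config n → ℝ} (hρ : 0 ≤ ρ)
    (hV : ∀ η, 0 ≤ V η) (hV_one : ∀ η, b < mag η → 1 ≤ V η)
    (hdrift : ∀ σ, b < mag σ → ∑ η, rKernel β n σ η * V η ≤ ρ * V σ)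
    (t : ℕ) (σ : Config n) :
    surviveAbove β n b t σ ≤ ρ ^ t * V σ := by
  induction t generalizing σ with
  | zero =>
    rw [surviveAbove, pow_zero, one_mul]
    split_ifs with h
    exacts [hV_one σ h, hV σ]
  | succ t ih =>
    rw [surviveAbove]
    split_ifs with h
    · calc ∑ η, rKernel β n σ η * surviveAbove β n b t η
          ≤ ∑ η, rKernel β n σ η * (ρ ^ t * V η) :=
            Finset.sum_le_sum fun η _ =>
              mul_le_mul_of_nonneg_left (ih η) (rKernel_nonneg β σ η)
        _ = ρ ^ t * ∑ η, rKernel β n σ η * V η := by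
            rw [Finset.mul_sum]
            exact Finset.sum_congr rfl fun η _ => mul_left_comm _ _ _
        _ ≤ ρ ^ t * (ρ * V σ) := mul_le_mul_of_nonneg_left (hdrift σ h) (pow_nonneg hρ t)
        _ = ρ ^ (t + 1) * V σ := by ring
    · exact mul_nonneg (pow_nonneg hρ _) (hV σ)

theorem surviveAbove_le_geometric {β sstar b : ℝ} (hβ : 0 ≤ β) (hs : 0 ≤ sstar)
    (hfix : tanh (β * sstar) = sstar) (hn : 0 < n) (hb : sstar + 2 / n ≤ b)
    (t : ℕ) (σ : Config n) :
    surviveAbove β n b t σ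
      ≤ (1 - (1 - β * (1 - sstar ^ 2)) / n) ^ t * (max (mag σ - sstar) 0 / (b - sstar)) := by
  have hn' : (1 : ℝ) ≤ n := by exact_mod_cast hn
  have hbs : 0 < b - sstar := by linarith [div_pos two_pos (by linarith : (0 : ℝ) < n)]
  have hL := mul_one_sub_sq_nonneg_of_tanh_eq hβ hfix
  refine surviveAbove_le_pow_mul (V := fun η => max (mag η - sstar) 0 / (b - sstar)) ?_
    (fun η => by positivity) (fun η hη => ?_) (fun σ hσ => ?_) t σ
  · rw [sub_nonneg, div_le_one (by linarith)]
    linarith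
  · rw [one_le_div hbs]
    exact le_max_of_le_left (by linarith)
  · simp only [← mul_div_assoc, ← Finset.sum_div]
    rw [max_eq_left (by linarith [div_pos two_pos (by linarith : (0 : ℝ) < n)])]
    exact div_le_div_of_nonneg_right
      (sum_rKernel_mul_max_mag_sub_le hβ hs hfix (by linarith)) hbs.le

theorem surviveAbove_floor_le {β sstar α : ℝ} (hβ : 0 ≤ β) (hs : 0 < sstar)
    (hfix : tanh (β * sstar) = sstar) (hγ : 0 < 1 - β * (1 - sstar ^ 2)) (hα : 0 < α)
    (hn : 1 ≤ n) (hsqrt : 2 / α ≤ √n) (σ : Config n) :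
    surviveAbove β n (sstar + α / √n) ⌊2 / (1 - β * (1 - sstar ^ 2)) * n * log n⌋₊ σ
      ≤ exp 1 / α * (n : ℝ)⁻¹ := by
  have hn0 : (0 : ℝ) < n := by exact_mod_cast hn
  have hsqrt0 : 0 < √(n : ℝ) := sqrt_pos.mpr hn0
  have hsq : √(n : ℝ) * √n = n := mul_self_sqrt hn0.le
  have hγ1 : 1 - β * (1 - sstar ^ 2) ≤ 1 :=
    sub_le_self _ (mul_one_sub_sq_nonneg_of_tanh_eq hβ hfix)
  have hb : sstar + 2 / n ≤ sstar + α / √n := by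
    have : 2 ≤ α * √n := by rwa [div_le_iff₀' hα] at hsqrt
    rw [add_le_add_iff_left, div_le_div_iff₀ hn0 hsqrt0]
    nlinarith
  have hV : max (mag σ - sstar) 0 / (sstar + α / √n - sstar) ≤ √n / α := by
    rw [add_sub_cancel_left, div_le_iff₀ (by positivity), div_mul_div_cancel₀' hsqrt0.ne',
      div_self hα.ne']
    exact max_le (by linarith [mag_le_one σ]) zero_le_one
  calc _ ≤ exp 1 / n ^ 2 * (√n / α) :=
        (surviveAbove_le_geometric hβ hs.le hfix hn hb _ σ).trans <|
          mul_le_mul (one_sub_div_pow_floor_le hγ hγ1 hn) hV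
            (by rw [add_sub_cancel_left]; positivity) (by positivity)
    _ ≤ exp 1 / α * (n : ℝ)⁻¹ := by
        rw [div_mul_div_comm, div_le_iff₀ (by positivity)]
        have : √(n : ℝ) ≤ n := (sqrt_le_left hn0.le).mpr
          (by nlinarith [(Nat.one_le_cast.mpr hn : (1 : ℝ) ≤ n)])
        calc exp 1 * √n ≤ exp 1 * n := by gcongr
          _ = exp 1 / α * (n : ℝ)⁻¹ * (n ^ 2 * α) := by field_simp

end Chain

theorem lowtemp_descent_general (β : ℝ) (hβ : 1 < β) (sstar : ℝ) (hs0 : 0 < sstar)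
    (hfix : Real.tanh (β * sstar) = sstar)
    (α : ℝ) (hα : 0 < α) :
    ∃ c > (0 : ℝ),
      Filter.Tendsto (fun n : ℕ =>
          ⨆ σ : {σ : Config n // 0 ≤ mag σ},
            surviveAbove β n (sstar + α / Real.sqrt n)
              ⌊c * n * Real.log n⌋₊ σ.1)
        Filter.atTop (nhds 0) := by
  have hγ : 0 < 1 - β * (1 - sstar ^ 2) :=
    sub_pos.mpr (mul_one_sub_sq_lt_one_of_tanh_eq (zero_lt_one.trans hβ) hs0 hfix)
  refine ⟨2 / (1 - β * (1 - sstar ^ 2)), div_pos two_pos hγ, ?_⟩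
  have hsqrt : ∀ᶠ n : ℕ in atTop, 2 / α ≤ √n :=
    (tendsto_sqrt_atTop.comp tendsto_natCast_atTop_atTop).eventually_ge_atTop _
  refine squeeze_zero' (.of_forall fun n => Real.iSup_nonneg fun σ => surviveAbove_nonneg ..) ?_
    (by simpa using (tendsto_inv_atTop_nhds_zero_nat (𝕜 := ℝ)).const_mul (exp 1 / α))
  filter_upwards [eventually_ge_atTop 1, hsqrt] with n hn hsq
  exact Real.iSup_le (fun σ => surviveAbove_floor_le (by linarith) hs0 hfix hγ hα hn hsq σ.1)
    (by positivity)

/-- Fast descent to the metastable magnetization at low temperature: let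
`β > 1` and let `s⋆` be the unique positive solution of `tanh(βs) = s`.
For every `α > 0`, with `τ⋆ = inf{t : S⁺_t ≤ s⋆ + α n^{-1/2}}`, there is a
constant `c > 0` (depending on `α` and `β`) such that, uniformly over
starting states in `Ω⁺`, `P(τ⋆ > c n log n) → 0` as `n → ∞`. -/
theorem lowtemp_descent (β : ℝ) (hβ : 1 < β) (sstar : ℝ) (hs0 : 0 < sstar)
    (hfix : Real.tanh (β * sstar) = sstar)
    (huniq : ∀ y : ℝ, 0 < y → Real.tanh (β * y) = y → y = sstar)
    (α : ℝ) (hα : 0 < α) :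
    ∃ c > (0 : ℝ),
      Filter.Tendsto (fun n : ℕ =>
          ⨆ σ : {σ : Config n // 0 ≤ mag σ},
            surviveAbove β n (sstar + α / Real.sqrt n)
              ⌊c * n * Real.log n⌋₊ σ.1)
        Filter.atTop (nhds 0) :=
  lowtemp_descent_general β hβ sstar hs0 hfix α hα

end

end CW
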